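/- arXiv:1502.06783 — 3 statements merged into one kernel-verified Lean document; each statement's English description precedes it below -/
import Mathlib

section
/- Let d ∈ ℕ, d ≥ 1, and let F be a family of configurations over ℝ^d. Then every sequence in F admits a subsequence converging vaguely to some configuration over ℝ^d (i.e. F is relatively compact in the vague topology on the configuration space) if and only if for every n ∈ ℕ one has sup_{γ ∈ F} ( |γ ∩ B_n(0)| + δ⁻¹(γ, B_n(0)) ) < ∞. -/
open Filter Topology Metric Set

noncomputable section

/-- A configuration over `ℝ^d`: a locally finite subset. -/
def IsConfiguration {d : ℕ} (γ : Set (EuclideanSpace ℝ (Fin d))) : Prop :=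
  ∀ K : Set (EuclideanSpace ℝ (Fin d)), IsCompact K → (γ ∩ K).Finite

/-- Vague convergence of a sequence of configurations: convergence of pairings with
continuous compactly supported test functions. -/
def VagueTendsto {d : ℕ} (γ : ℕ → Set (EuclideanSpace ℝ (Fin d)))
    (γ' : Set (EuclideanSpace ℝ (Fin d))) : Prop :=
  ∀ f : EuclideanSpace ℝ (Fin d) → ℝ, Continuous f → HasCompactSupport f →
    Tendsto (fun k => ∑ᶠ x ∈ γ k, f x) atTop (𝓝 (∑ᶠ x ∈ γ', f x))

/-- `δ⁻¹(γ, B)`: the reciprocal of the minimal distance between distinct points of `γ ∩ B`,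
interpreted as `0` (= `sSup ∅` in `ℝ`) when `γ ∩ B` has fewer than two points. -/
def deltaInv {d : ℕ} (γ B : Set (EuclideanSpace ℝ (Fin d))) : ℝ :=
  sSup {r | ∃ x ∈ γ ∩ B, ∃ y ∈ γ ∩ B, x ≠ y ∧ r = 1 / dist x y}


/-!
Necessity: along a vaguely convergent sequence, pairing with a bump equal to `1` on `B_n` bounds
the counts in `B_n`. If distinct points `x_k ≠ y_k` of `γ_k` had `|x_k - y_k| → 0`, a
subsequence would accumulate at some `p`; a bump at `p` whose support meets the limit
configuration at most in `p` has limit pairing `≤ 1`, yet pairing `≥ 2` along the sequence.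

Sufficiency: list `γ_k ∩ B_n` as a tuple of fixed length `N_n`, padded with distinct points of
norm in `[n + 1, n + 2]`. All these tuples lie in one compact countable product, so a single
subsequence makes every entry converge. A limit entry of norm `< n + 1` is a limit of genuine
points, so uniform separation keeps such entries distinct; the limit configuration collects, over
all `n`, the limit entries of norm `< n`.
-/

open Function

lemma finsum_mem_le_finsum_mem_of_subset {α : Type*} {f : α → ℝ} {s t : Set α}
    (hf : ∀ x, 0 ≤ f x) (hst : s ⊆ t) (ht : (t ∩ support f).Finite) :
    ∑ᶠ x ∈ s, f x ≤ ∑ᶠ x ∈ t, f x := by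
  rw [← finsum_mem_add_sdiff' hst ht]
  exact le_add_of_nonneg_right (finsum_nonneg fun x => finsum_nonneg fun _ => hf x)

lemma exists_injective_fin_of_ncard_le {α : Type*} {s P : Set α} (hs : s.Finite)
    (hP : P.Infinite) {N : ℕ} (hN : s.ncard ≤ N) :
    ∃ e : Fin N → α, Injective e ∧ s ⊆ range e ∧ range e ⊆ s ∪ P := by
  classical
  obtain ⟨t, htP, htcard⟩ := (hP.sdiff hs).exists_subset_card_eq (N - s.ncard)
  have hdisj : Disjoint hs.toFinset t :=
    Finset.disjoint_left.2 fun x hx hxt => (htP hxt).2 (hs.mem_toFinset.1 hx)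
  have hcard : (hs.toFinset ∪ t).card = N := by
    rw [Finset.card_union_of_disjoint hdisj, htcard, ← ncard_eq_toFinset_card s hs]
    omega
  let eqv := Finset.equivFinOfCardEq hcard
  refine ⟨fun i => eqv.symm i, Subtype.val_injective.comp eqv.symm.injective,
    fun x hx => ?_, ?_⟩
  · obtain ⟨i, hi⟩ :=
      eqv.symm.surjective ⟨x, Finset.mem_union_left _ (hs.mem_toFinset.2 hx)⟩
    exact ⟨i, congrArg Subtype.val hi⟩
  · rintro _ ⟨i, rfl⟩
    rcases Finset.mem_union.1 (eqv.symm i).2 with h | h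
    · exact Or.inl (hs.mem_toFinset.1 h)
    · exact Or.inr (htP h).1

lemma mem_range_of_frequently_mem_range {X ι : Type*} [TopologicalSpace X] [T2Space X]
    [Finite ι] {a : ℕ → ι → X} {b : ι → X} {x : ℕ → X} {y : X}
    (ha : ∀ i, Tendsto (fun k => a k i) atTop (𝓝 (b i))) (hx : Tendsto x atTop (𝓝 y))
    (hmem : ∃ᶠ k in atTop, x k ∈ range (a k)) : y ∈ range b := by
  have hclosed : IsClosed {p : (ι → X) × X | p.2 ∈ range p.1} := by
    have hunion : {p : (ι → X) × X | p.2 ∈ range p.1} = ⋃ i, {p | p.1 i = p.2} := by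
      ext; simp
    rw [hunion]
    exact isClosed_iUnion_of_finite fun i =>
      isClosed_eq ((continuous_apply i).comp continuous_fst) continuous_snd
  exact hclosed.mem_of_frequently_of_tendsto hmem ((tendsto_pi_nhds.2 ha).prodMk_nhds hx)

lemma exists_subseq_tendsto_pi {ι X : Type*} [Countable ι] [PseudoMetricSpace X]
    {K : ι → Set X} (hK : ∀ i, IsCompact (K i)) {x : ℕ → ι → X}
    (hx : ∀ k i, x k i ∈ K i) :
    ∃ b : ι → X, ∃ φ : ℕ → ℕ, StrictMono φ ∧
      ∀ i, Tendsto (fun j => x (φ j) i) atTop (𝓝 (b i)) := by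
  obtain ⟨b, -, φ, hφ, hb⟩ :=
    (isCompact_univ_pi hK).tendsto_subseq fun k => mem_univ_pi.2 (hx k)
  exact ⟨b, φ, hφ, tendsto_pi_nhds.1 hb⟩

lemma infinite_closedBall_sdiff_ball {F : Type*} [NormedAddCommGroup F] [NormedSpace ℝ F]
    [Nontrivial F] {a b : ℝ} (ha : 0 ≤ a) (hab : a < b) :
    (closedBall (0 : F) b \ ball 0 a).Infinite := by
  obtain ⟨v, hv⟩ := exists_norm_eq F zero_le_one
  have hv0 : v ≠ 0 := norm_ne_zero_iff.1 (by rw [hv]; exact one_ne_zero)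
  refine ((Icc_infinite hab).image (smul_left_injective ℝ hv0).injOn).mono ?_
  rintro _ ⟨r, ⟨har, hrb⟩, rfl⟩
  have hnorm : ‖r • v‖ = r := by
    rw [norm_smul, hv, mul_one, Real.norm_of_nonneg (ha.trans har)]
  simp [hnorm, har, hrb]

lemma exists_nat_subset_ball {X : Type*} [PseudoMetricSpace X] {K : Set X} (hK : IsCompact K)
    (c : X) : ∃ n : ℕ, K ⊆ ball c n := by
  obtain ⟨r, hr⟩ := hK.isBounded.subset_ball c
  obtain ⟨n, hn⟩ := exists_nat_gt r
  exact ⟨n, hr.trans (ball_subset_ball hn.le)⟩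

variable {d : ℕ}

local notation "ℝ^" n:max => EuclideanSpace ℝ (Fin n)

lemma deltaInv_nonneg (γ B : Set (ℝ^d)) : 0 ≤ deltaInv γ B :=
  Real.sSup_nonneg fun _ ⟨_, _, _, _, _, hr⟩ => hr ▸ by positivity

lemma one_div_dist_le_deltaInv {γ B : Set (ℝ^d)} (h : (γ ∩ B).Finite) {x y : ℝ^d}
    (hx : x ∈ γ ∩ B) (hy : y ∈ γ ∩ B) (hxy : x ≠ y) : 1 / dist x y ≤ deltaInv γ B := by
  refine le_csSup (((h.prod h).image fun p : (ℝ^d) × (ℝ^d) => 1 / dist p.1 p.2).bddAbove.mono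
    ?_) ⟨x, hx, y, hy, hxy, rfl⟩
  rintro _ ⟨x, hx, y, hy, -, rfl⟩
  exact ⟨(x, y), ⟨hx, hy⟩, rfl⟩

lemma exists_lt_one_div_dist_of_lt_deltaInv {γ B : Set (ℝ^d)} {r : ℝ} (hr : 0 ≤ r)
    (h : r < deltaInv γ B) :
    ∃ x ∈ γ ∩ B, ∃ y ∈ γ ∩ B, x ≠ y ∧ r < 1 / dist x y := by
  have hne : {r | ∃ x ∈ γ ∩ B, ∃ y ∈ γ ∩ B, x ≠ y ∧ r = 1 / dist x y}.Nonempty := by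
    by_contra hempty
    rw [not_nonempty_iff_eq_empty] at hempty
    rw [deltaInv, hempty, Real.sSup_empty] at h
    linarith
  obtain ⟨_, ⟨x, hx, y, hy, hxy, rfl⟩, hlt⟩ := exists_lt_of_lt_csSup hne h
  exact ⟨x, hx, y, hy, hxy, hlt⟩

lemma IsConfiguration.finite_inter_support {γ : Set (ℝ^d)} (hγ : IsConfiguration γ)
    {f : ℝ^d → ℝ} (hf : HasCompactSupport f) : (γ ∩ support f).Finite :=
  (hγ _ hf).subset (inter_subset_inter_right _ (subset_tsupport f))

lemma IsConfiguration.exists_ball_inter_subset {γ : Set (ℝ^d)} (hγ : IsConfiguration γ)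
    (x : ℝ^d) : ∃ r > 0, γ ∩ ball x r ⊆ {x} := by
  have hS : IsClosed ((γ ∩ closedBall x 1) \ {x}) :=
    (hγ _ (isCompact_closedBall x 1)).sdiff.isClosed
  obtain ⟨r, hr, hball⟩ := Metric.isOpen_iff.1 hS.isOpen_compl x (by simp)
  refine ⟨min r 1, by positivity, fun z ⟨hzγ, hz⟩ => ?_⟩
  by_contra hzx
  exact hball (ball_subset_ball (min_le_left _ _) hz)
    ⟨⟨hzγ, ball_subset_closedBall (ball_subset_ball (min_le_right _ _) hz)⟩, hzx⟩

lemma ncard_inter_le_finsum_mem {γ s : Set (ℝ^d)} (hγ : IsConfiguration γ) {f : ℝ^d → ℝ}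
    (hf : HasCompactSupport f) (hf0 : ∀ x, 0 ≤ f x) (hs : ∀ x ∈ s, f x = 1) :
    ((γ ∩ s).ncard : ℝ) ≤ ∑ᶠ x ∈ γ, f x := by
  have hfin := hγ.finite_inter_support hf
  have hγs : (γ ∩ s).Finite := hfin.subset fun x hx => ⟨hx.1, by simp [hs x hx.2]⟩
  calc ((γ ∩ s).ncard : ℝ) = ∑ᶠ x ∈ γ ∩ s, f x := by
        rw [finsum_mem_congr rfl fun x hx => hs x hx.2,
          finsum_mem_eq_finite_toFinset_sum _ hγs, ncard_eq_toFinset_card _ hγs]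
        simp
    _ ≤ ∑ᶠ x ∈ γ, f x := finsum_mem_le_finsum_mem_of_subset hf0 inter_subset_left hfin

namespace VagueTendsto

variable {γ : ℕ → Set (ℝ^d)} {γ' : Set (ℝ^d)}

lemma comp_tendsto (h : VagueTendsto γ γ') {φ : ℕ → ℕ} (hφ : Tendsto φ atTop atTop) :
    VagueTendsto (γ ∘ φ) γ' :=
  fun f hf hfs => (h f hf hfs).comp hφ

lemma exists_eventually_ncard_le (h : VagueTendsto γ γ') (hγ : ∀ k, IsConfiguration (γ k))
    (R : ℝ) : ∃ C : ℝ, ∀ᶠ k in atTop, ((γ k ∩ closedBall 0 R).ncard : ℝ) ≤ C := by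
  let g : ContDiffBump (0 : ℝ^d) := ⟨max R 1, max R 1 + 1, by positivity, by linarith⟩
  refine ⟨(∑ᶠ x ∈ γ', g x) + 1, ?_⟩
  filter_upwards [(h g g.continuous g.hasCompactSupport).eventually_le_const (lt_add_one _)]
    with k hk
  refine le_trans ?_ hk
  exact ncard_inter_le_finsum_mem (hγ k) g.hasCompactSupport (fun _ => g.nonneg) fun x hx =>
    g.one_of_mem_closedBall (closedBall_subset_closedBall (le_max_left _ _) hx)

lemma ne_of_tendsto (h : VagueTendsto γ γ') (hγ : ∀ k, IsConfiguration (γ k))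
    (hγ' : IsConfiguration γ') {x y : ℕ → ℝ^d} (hx : ∀ k, x k ∈ γ k)
    (hy : ∀ k, y k ∈ γ k) (hxy : ∀ k, x k ≠ y k) {p q : ℝ^d}
    (hxp : Tendsto x atTop (𝓝 p)) (hyq : Tendsto y atTop (𝓝 q)) : p ≠ q := by
  rintro rfl
  obtain ⟨r, hr, hiso⟩ := hγ'.exists_ball_inter_subset p
  let g : ContDiffBump p := ⟨r / 2, r, by positivity, by linarith⟩
  have hlim : ∑ᶠ z ∈ γ', g z ≤ 1 := by
    rw [← finsum_mem_inter_support, g.support_eq]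
    calc ∑ᶠ z ∈ γ' ∩ ball p r, g z ≤ ∑ᶠ z ∈ ({p} : Set (ℝ^d)), g z :=
          finsum_mem_le_finsum_mem_of_subset (fun _ => g.nonneg) hiso
            ((finite_singleton p).inter_of_left _)
      _ = g p := finsum_mem_singleton
      _ ≤ 1 := g.le_one
  have htwo : ∀ᶠ k in atTop, 2 ≤ ∑ᶠ z ∈ γ k, g z := by
    have hmem : closedBall p g.rIn ∈ 𝓝 p := closedBall_mem_nhds p g.rIn_pos
    filter_upwards [hxp hmem, hyq hmem] with k hxk hyk
    calc (2 : ℝ) = g (x k) + g (y k) := by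
          rw [g.one_of_mem_closedBall hxk, g.one_of_mem_closedBall hyk]; norm_num
      _ = ∑ᶠ z ∈ ({x k, y k} : Set (ℝ^d)), g z := (finsum_mem_pair (hxy k)).symm
      _ ≤ ∑ᶠ z ∈ γ k, g z :=
          finsum_mem_le_finsum_mem_of_subset (fun _ => g.nonneg)
            (insert_subset (hx k) (singleton_subset_iff.2 (hy k)))
            ((hγ k).finite_inter_support g.hasCompactSupport)
  linarith [ge_of_tendsto (h g g.continuous g.hasCompactSupport) htwo]

lemma exists_eventually_deltaInv_le (h : VagueTendsto γ γ') (hγ : ∀ k, IsConfiguration (γ k))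
    (hγ' : IsConfiguration γ') (R : ℝ) :
    ∃ C : ℝ, ∀ᶠ k in atTop, deltaInv (γ k) (closedBall 0 R) ≤ C := by
  by_contra! hC
  obtain ⟨φ, hφ, hφC⟩ := extraction_forall_of_frequently fun m : ℕ => hC (m + 1)
  choose x hx y hy hxy hlt using fun m =>
    exists_lt_one_div_dist_of_lt_deltaInv (by positivity) (hφC m)
  obtain ⟨p, -, ψ, hψ, hxp⟩ :=
    (isCompact_closedBall (0 : ℝ^d) R).tendsto_subseq fun m => (hx m).2
  have hdist : Tendsto (fun m => dist (x m) (y m)) atTop (𝓝 0) := by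
    refine squeeze_zero (fun _ => dist_nonneg) (fun m => ?_)
      tendsto_one_div_add_atTop_nhds_zero_nat
    have hm := hlt m
    rw [lt_div_iff₀ (dist_pos.2 (hxy m))] at hm
    rw [le_div_iff₀ (by positivity)]
    linarith
  exact (h.comp_tendsto (hφ.comp hψ).tendsto_atTop).ne_of_tendsto (fun _ => hγ _) hγ'
    (fun m => (hx (ψ m)).1) (fun m => (hy (ψ m)).1) (fun m => hxy (ψ m)) hxp
    (hxp.congr_dist (hdist.comp hψ.tendsto_atTop)) rfl

end VagueTendsto

lemma bounded_of_forall_exists_vagueTendsto {F : Set (Set (ℝ^d))}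
    (hF : ∀ γ ∈ F, IsConfiguration γ)
    (hcomp : ∀ u : ℕ → Set (ℝ^d), (∀ k, u k ∈ F) → ∃ φ : ℕ → ℕ, StrictMono φ ∧
      ∃ γ' : Set (ℝ^d), IsConfiguration γ' ∧ VagueTendsto (u ∘ φ) γ')
    (R : ℝ) :
    ∃ C : ℝ, ∀ γ ∈ F,
      ((γ ∩ closedBall 0 R).ncard : ℝ) + deltaInv γ (closedBall 0 R) ≤ C := by
  by_contra! hunbdd
  choose u huF hu using fun m : ℕ => hunbdd m
  obtain ⟨φ, hφ, γ', hγ', hconv⟩ := hcomp u huF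
  have hγ k : IsConfiguration ((u ∘ φ) k) := hF _ (huF (φ k))
  obtain ⟨C₁, h₁⟩ := hconv.exists_eventually_ncard_le hγ R
  obtain ⟨C₂, h₂⟩ := hconv.exists_eventually_deltaInv_le hγ hγ' R
  obtain ⟨m, hm⟩ := exists_nat_gt (C₁ + C₂)
  obtain ⟨k, hk₁, hk₂, hkm⟩ := (h₁.and (h₂.and (eventually_ge_atTop m))).exists
  have hφk : (m : ℝ) ≤ φ k := Nat.cast_le.2 (hkm.trans hφ.le_apply)
  have hval : (φ k : ℝ) < ((u ∘ φ) k ∩ closedBall 0 R).ncard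
      + deltaInv ((u ∘ φ) k) (closedBall 0 R) := hu (φ k)
  linarith

structure IsPaddedEnumeration (u : ℕ → Set (ℝ^d)) {N : ℕ → ℕ}
    (e : ℕ → ∀ n : ℕ, Fin (N n) → ℝ^d) : Prop where
  injective : ∀ k (n : ℕ), Injective (e k n)
  subset_range : ∀ k (n : ℕ), u k ∩ closedBall 0 n ⊆ range (e k n)
  range_subset : ∀ k (n : ℕ), range (e k n) ⊆ u k ∩ closedBall 0 n ∪ (ball 0 (n + 1))ᶜ

lemma exists_isPaddedEnumeration [Nontrivial (ℝ^d)] {u : ℕ → Set (ℝ^d)}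
    (hu : ∀ k, IsConfiguration (u k)) {N : ℕ → ℕ}
    (hN : ∀ k (n : ℕ), (u k ∩ closedBall 0 n).ncard ≤ N n) :
    ∃ e : ℕ → ∀ n : ℕ, Fin (N n) → ℝ^d,
      IsPaddedEnumeration u e ∧ ∀ k (n : ℕ) i, e k n i ∈ closedBall 0 (n + 2) := by
  choose e he_inj he_sub he_range using fun k (n : ℕ) =>
    exists_injective_fin_of_ncard_le (hu k _ (isCompact_closedBall 0 n))
      (infinite_closedBall_sdiff_ball (F := ℝ^d) (a := n + 1) (b := n + 2) (by positivity)
        (by linarith)) (hN k n)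
  refine ⟨e, ⟨he_inj, he_sub, fun k (n : ℕ) => (he_range k n).trans
    (union_subset_union_right _ (sdiff_subset_compl _ _))⟩, fun k (n : ℕ) i => ?_⟩
  rcases he_range k n ⟨i, rfl⟩ with h | h
  · exact closedBall_subset_closedBall (by linarith) h.2
  · exact h.1

def limitConfiguration {N : ℕ → ℕ} (t : ∀ n : ℕ, Fin (N n) → ℝ^d) : Set (ℝ^d) :=
  ⋃ n : ℕ, range (t n) ∩ ball 0 n

namespace IsPaddedEnumeration

variable {u : ℕ → Set (ℝ^d)} {N : ℕ → ℕ} {e : ℕ → ∀ n : ℕ, Fin (N n) → ℝ^d}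
  {t : ∀ n : ℕ, Fin (N n) → ℝ^d}

lemma comp (he : IsPaddedEnumeration u e) (φ : ℕ → ℕ) :
    IsPaddedEnumeration (u ∘ φ) (e ∘ φ) :=
  ⟨fun k => he.injective (φ k), fun k => he.subset_range (φ k), fun k => he.range_subset (φ k)⟩

lemma eventually_mem (he : IsPaddedEnumeration u e)
    (ht : ∀ n i, Tendsto (fun k => e k n i) atTop (𝓝 (t n i))) {n : ℕ} {i : Fin (N n)}
    (hi : ‖t n i‖ < n + 1) : ∀ᶠ k in atTop, e k n i ∈ u k ∩ closedBall 0 n := by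
  filter_upwards [ht n i (isOpen_ball.mem_nhds (mem_ball_zero_iff.2 hi))] with k hk
  exact (he.range_subset k n ⟨i, rfl⟩).resolve_right (not_not.2 hk)

lemma injOn (he : IsPaddedEnumeration u e)
    (ht : ∀ n i, Tendsto (fun k => e k n i) atTop (𝓝 (t n i))) {C : ℕ → ℝ}
    (hsep : ∀ k (n : ℕ), (u k ∩ closedBall 0 n).Pairwise fun x y => 1 ≤ C n * dist x y)
    (n : ℕ) : InjOn (t n) {i | ‖t n i‖ < n + 1} := by
  intro i hi j hj hij
  by_contra hne
  have hlim : 1 ≤ C n * dist (t n i) (t n j) := by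
    refine ge_of_tendsto (((ht n i).dist (ht n j)).const_mul (C n)) ?_
    filter_upwards [he.eventually_mem ht hi, he.eventually_mem ht hj] with k hik hjk
    exact hsep k n hik hjk ((he.injective k n).ne hne)
  rw [hij, dist_self, mul_zero] at hlim
  norm_num at hlim

lemma mem_range_of_mem_range (he : IsPaddedEnumeration u e)
    (ht : ∀ n i, Tendsto (fun k => e k n i) atTop (𝓝 (t n i))) {m n : ℕ} {x : ℝ^d}
    (hxm : x ∈ range (t m)) (hm : ‖x‖ < m + 1) (hn : ‖x‖ < n) : x ∈ range (t n) := by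
  obtain ⟨i, rfl⟩ := hxm
  refine mem_range_of_frequently_mem_range (ht n) (ht m i) (Eventually.frequently ?_)
  filter_upwards [he.eventually_mem ht hm,
    ht m i (isOpen_ball.mem_nhds (mem_ball_zero_iff.2 hn))] with k hk hkn
  exact he.subset_range k n ⟨hk.1, mem_closedBall_zero_iff.2 (mem_ball_zero_iff.1 hkn).le⟩

lemma mem_limitConfiguration_iff (he : IsPaddedEnumeration u e)
    (ht : ∀ n i, Tendsto (fun k => e k n i) atTop (𝓝 (t n i))) {n : ℕ} {x : ℝ^d}
    (hx : ‖x‖ < n) : x ∈ limitConfiguration t ↔ x ∈ range (t n) := by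
  refine ⟨fun h => ?_, fun h => mem_iUnion.2 ⟨n, h, mem_ball_zero_iff.2 hx⟩⟩
  obtain ⟨m, hxm, hxb⟩ := mem_iUnion.1 h
  exact he.mem_range_of_mem_range ht hxm (by linarith [mem_ball_zero_iff.1 hxb]) hx

lemma isConfiguration_limitConfiguration (he : IsPaddedEnumeration u e)
    (ht : ∀ n i, Tendsto (fun k => e k n i) atTop (𝓝 (t n i))) :
    IsConfiguration (limitConfiguration t) := by
  intro K hK
  obtain ⟨n, hn⟩ := exists_nat_subset_ball hK 0
  exact (finite_range (t n)).subset fun x ⟨hx, hxK⟩ =>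
    (he.mem_limitConfiguration_iff ht (mem_ball_zero_iff.1 (hn hxK))).1 hx

lemma finsum_mem_eq_sum (he : IsPaddedEnumeration u e) {f : ℝ^d → ℝ} {n : ℕ}
    (hf : support f ⊆ ball 0 n) (k : ℕ) : ∑ᶠ x ∈ u k, f x = ∑ i, f (e k n i) := by
  rw [← finsum_eq_sum_of_fintype, ← finsum_mem_range (he.injective k n)]
  refine finsum_mem_inter_support_eq' _ _ _ fun x hx => ⟨fun hxu => ?_, fun hxe => ?_⟩
  · exact he.subset_range k n ⟨hxu, mem_closedBall_zero_iff.2 (mem_ball_zero_iff.1 (hf hx)).le⟩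
  · refine ((he.range_subset k n hxe).resolve_right fun h => h ?_).1
    exact ball_subset_ball (by linarith) (hf hx)

lemma sum_eq_finsum_mem_limitConfiguration (he : IsPaddedEnumeration u e)
    (ht : ∀ n i, Tendsto (fun k => e k n i) atTop (𝓝 (t n i))) {C : ℕ → ℝ}
    (hsep : ∀ k (n : ℕ), (u k ∩ closedBall 0 n).Pairwise fun x y => 1 ≤ C n * dist x y)
    {f : ℝ^d → ℝ} {n : ℕ} (hf : support f ⊆ ball 0 n) :
    ∑ i, f (t n i) = ∑ᶠ x ∈ limitConfiguration t, f x := by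
  have hinj : InjOn (t n) (support (f ∘ t n)) := (he.injOn ht hsep n).mono fun i hi => by
    have := mem_ball_zero_iff.1 (hf hi)
    show ‖t n i‖ < n + 1
    linarith
  rw [← finsum_eq_sum_of_fintype, ← finsum_mem_range' hinj]
  exact finsum_mem_inter_support_eq' _ _ _ fun x hx =>
    (he.mem_limitConfiguration_iff ht (mem_ball_zero_iff.1 (hf hx))).symm

lemma vagueTendsto_limitConfiguration (he : IsPaddedEnumeration u e)
    (ht : ∀ n i, Tendsto (fun k => e k n i) atTop (𝓝 (t n i))) {C : ℕ → ℝ}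
    (hsep : ∀ k (n : ℕ), (u k ∩ closedBall 0 n).Pairwise fun x y => 1 ≤ C n * dist x y) :
    VagueTendsto u (limitConfiguration t) := by
  intro f hf hfs
  obtain ⟨n, hn⟩ := exists_nat_subset_ball hfs 0
  have hsupp := (subset_tsupport f).trans hn
  simp_rw [he.finsum_mem_eq_sum hsupp, ← he.sum_eq_finsum_mem_limitConfiguration ht hsep hsupp]
  exact tendsto_finsetSum _ fun i _ => (hf.tendsto _).comp (ht n i)

end IsPaddedEnumeration

lemma exists_subseq_vagueTendsto_of_bounded [Nontrivial (ℝ^d)] {u : ℕ → Set (ℝ^d)}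
    (hu : ∀ k, IsConfiguration (u k))
    (hbdd : ∀ n : ℕ, ∃ C : ℝ, ∀ k,
      ((u k ∩ closedBall 0 n).ncard : ℝ) + deltaInv (u k) (closedBall 0 n) ≤ C) :
    ∃ φ : ℕ → ℕ, StrictMono φ ∧
      ∃ γ' : Set (ℝ^d), IsConfiguration γ' ∧ VagueTendsto (u ∘ φ) γ' := by
  choose C hC using hbdd
  have hcount k (n : ℕ) : ((u k ∩ closedBall (0 : ℝ^d) n).ncard : ℝ) ≤ C n := by
    linarith [hC n k, deltaInv_nonneg (u k) (closedBall (0 : ℝ^d) n)]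
  have hdelta k (n : ℕ) : deltaInv (u k) (closedBall (0 : ℝ^d) n) ≤ C n := by
    linarith [hC n k, (u k ∩ closedBall (0 : ℝ^d) n).ncard.cast_nonneg (α := ℝ)]
  have hcard k (n : ℕ) : (u k ∩ closedBall (0 : ℝ^d) n).ncard ≤ ⌈C n⌉₊ := by
    exact_mod_cast (hcount k n).trans (Nat.le_ceil _)
  have hsep k (n : ℕ) :
      (u k ∩ closedBall (0 : ℝ^d) n).Pairwise fun x y => 1 ≤ C n * dist x y := by
    intro x hx y hy hxy
    have hle := (one_div_dist_le_deltaInv (hu k _ (isCompact_closedBall 0 n)) hx hy hxy).trans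
      (hdelta k n)
    exact (div_le_iff₀ (dist_pos.2 hxy)).1 hle
  obtain ⟨e, he, he_mem⟩ := exists_isPaddedEnumeration hu hcard
  obtain ⟨t, φ, hφ, ht⟩ := exists_subseq_tendsto_pi
    (K := fun p : Σ n : ℕ, Fin ⌈C n⌉₊ => closedBall (0 : ℝ^d) (p.1 + 2))
    (fun _ => isCompact_closedBall _ _) (x := fun k p => e k p.1 p.2) fun k p => he_mem k p.1 p.2
  have ht' n i : Tendsto (fun k => (e ∘ φ) k n i) atTop (𝓝 (t ⟨n, i⟩)) := ht ⟨n, i⟩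
  exact ⟨φ, hφ, _, (he.comp φ).isConfiguration_limitConfiguration ht',
    (he.comp φ).vagueTendsto_limitConfiguration ht' fun k => hsep (φ k)⟩

theorem relatively_compact_iff_bounded_counts_and_separation
    (d : ℕ) (hd : 1 ≤ d) (F : Set (Set (EuclideanSpace ℝ (Fin d))))
    (hF : ∀ γ ∈ F, IsConfiguration γ) :
    (∀ u : ℕ → Set (EuclideanSpace ℝ (Fin d)), (∀ k, u k ∈ F) →
      ∃ φ : ℕ → ℕ, StrictMono φ ∧
        ∃ γ' : Set (EuclideanSpace ℝ (Fin d)), IsConfiguration γ' ∧ VagueTendsto (u ∘ φ) γ')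
    ↔
    (∀ n : ℕ, ∃ C : ℝ, ∀ γ ∈ F,
      ((γ ∩ closedBall (0 : EuclideanSpace ℝ (Fin d)) n).ncard : ℝ)
        + deltaInv γ (closedBall (0 : EuclideanSpace ℝ (Fin d)) n) ≤ C) := by
  have : Nonempty (Fin d) := ⟨⟨0, hd⟩⟩
  refine ⟨fun hcomp n => bounded_of_forall_exists_vagueTendsto hF hcomp n,
    fun hbdd u hu => exists_subseq_vagueTendsto_of_bounded (fun k => hF _ (hu k)) fun n => ?_⟩
  obtain ⟨C, hC⟩ := hbdd n
  exact ⟨C, fun k => hC _ (hu k)⟩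

end
end

section
/- Let d ∈ ℕ, d ≥ 1, let (γ_k) be a sequence of configurations over ℝ^d converging vaguely to a configuration γ. Then for every continuous compactly supported function f : ℝ^d × ℝ^d → ℝ, the double sums converge: ∑_{(x, y) ∈ γ_k × γ_k} f(x, y) → ∑_{(x, y) ∈ γ × γ} f(x, y) as k → ∞. In other words, the map γ ↦ ⟨γ × γ, f⟩ is sequentially continuous with respect to vague convergence. -/
/-!
Cover the first projection of the support of `f` by finitely many `δ`-balls and take a
subordinate partition of unity `ρ_c`. By uniform continuity, `f` is `ε`-close everywhere to
`(x, y) ↦ ∑_c ρ_c(x) f(c, y)`, whose pair sum over `γ × γ` factors as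
`∑_c ⟨γ, ρ_c⟩ ⟨γ, f(c, ·)⟩` and therefore converges under vague convergence. All these functions
live in one compact set `L`, fixed before `ε`, and testing against a cutoff equal to `1` on `L`
bounds the number of points of every `γ_k` in `L` by some `M`; so the pair sums of `f` and of
its approximant differ by at most `ε M²`, uniformly in `k`.
-/

open Filter Topology Metric Set

noncomputable section

open Function

theorem tendsto_of_forall_approx {α ι : Type*} [PseudoMetricSpace α] {l : Filter ι} {a : ι → α}
    {A : α} (h : ∀ ε > 0, ∃ (b : ι → α) (B : α), Tendsto b l (𝓝 B) ∧
      (∀ k, dist (a k) (b k) ≤ ε) ∧ dist A B ≤ ε) :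
    Tendsto a l (𝓝 A) := by
  refine Metric.tendsto_nhds.2 fun ε hε => ?_
  obtain ⟨b, B, hb, hab, hAB⟩ := h (ε / 3) (by positivity)
  filter_upwards [Metric.tendsto_nhds.1 hb (ε / 3) (by positivity)] with k hk
  calc dist (a k) A ≤ dist (a k) (b k) + dist (b k) B + dist B A := dist_triangle4 _ _ _ _
    _ < ε := by linarith [hab k, dist_comm A B]

section FiniteSums

variable {α : Type*} {s L : Set α}

theorem finsum_mem_eq_sum_toFinset_of_support_subset {M : Type*} [AddCommMonoid M]
    (hsL : (s ∩ L).Finite) {g : α → M} (hg : support g ⊆ L) :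
    ∑ᶠ x ∈ s, g x = ∑ x ∈ hsL.toFinset, g x :=
  finsum_mem_eq_sum_of_subset g (by simpa using inter_subset_inter_right s hg)
    (by simp [inter_subset_left])

theorem finsum_mem_prod_eq_sum_toFinset_of_support_subset {M : Type*} [AddCommMonoid M]
    (hsL : (s ∩ L).Finite) {G : α × α → M} (hG : support G ⊆ L ×ˢ L) :
    ∑ᶠ p ∈ s ×ˢ s, G p = ∑ p ∈ hsL.toFinset ×ˢ hsL.toFinset, G p := by
  refine finsum_mem_eq_sum_of_subset G (fun p hp => ?_) fun p hp => ?_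
  · have := hG hp.2
    simp_all
  · simp_all

theorem ncard_inter_le_finsum_mem_s5 {χ : α → ℝ} (hs : (s ∩ support χ).Finite)
    (hχ : ∀ x, 0 ≤ χ x) (hχL : EqOn χ 1 L) : ((s ∩ L).ncard : ℝ) ≤ ∑ᶠ x ∈ s, χ x := by
  have hLχ : s ∩ L ⊆ s ∩ support χ :=
    inter_subset_inter_right s fun x hx => by simp [hχL hx]
  have hsL := hs.subset hLχ
  rw [finsum_mem_eq_sum χ hs, ncard_eq_toFinset_card _ hsL, Finset.cast_card]
  calc ∑ x ∈ hsL.toFinset, (1 : ℝ) = ∑ x ∈ hsL.toFinset, χ x :=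
        Finset.sum_congr rfl fun x hx => (hχL (hsL.mem_toFinset.1 hx).2).symm
    _ ≤ ∑ x ∈ hs.toFinset, χ x :=
        Finset.sum_le_sum_of_subset_of_nonneg (by simpa using hLχ) fun x _ _ => hχ x

theorem abs_finsum_mem_prod_sub_le (hsL : (s ∩ L).Finite) {G H : α × α → ℝ}
    (hG : support G ⊆ L ×ˢ L) (hH : support H ⊆ L ×ˢ L) {ε : ℝ} (hGH : ∀ p, |G p - H p| ≤ ε) :
    |∑ᶠ p ∈ s ×ˢ s, G p - ∑ᶠ p ∈ s ×ˢ s, H p| ≤ ε * (s ∩ L).ncard ^ 2 := by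
  rw [finsum_mem_prod_eq_sum_toFinset_of_support_subset hsL hG,
    finsum_mem_prod_eq_sum_toFinset_of_support_subset hsL hH, ← Finset.sum_sub_distrib,
    ncard_eq_toFinset_card _ hsL]
  calc _ ≤ ∑ p ∈ hsL.toFinset ×ˢ hsL.toFinset, |G p - H p| := Finset.abs_sum_le_sum_abs _ _
    _ ≤ ∑ p ∈ hsL.toFinset ×ˢ hsL.toFinset, ε := Finset.sum_le_sum fun p _ => hGH p
    _ = ε * hsL.toFinset.card ^ 2 := by simp [Finset.card_product]; ring

variable {ι : Type*} [Fintype ι] {ψ h : ι → α → ℝ}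

theorem support_sum_mul_subset {A B : Set α} (hψ : ∀ i, support (ψ i) ⊆ A)
    (hh : ∀ i, support (h i) ⊆ B) :
    support (fun p : α × α => ∑ i, ψ i p.1 * h i p.2) ⊆ A ×ˢ B := by
  intro p hp
  obtain ⟨i, -, hi⟩ := Finset.exists_ne_zero_of_sum_ne_zero hp
  exact ⟨hψ i (left_ne_zero_of_mul hi), hh i (right_ne_zero_of_mul hi)⟩

theorem finsum_mem_prod_sum_mul (hsL : (s ∩ L).Finite) (hψ : ∀ i, support (ψ i) ⊆ L)
    (hh : ∀ i, support (h i) ⊆ L) :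
    ∑ᶠ p ∈ s ×ˢ s, ∑ i, ψ i p.1 * h i p.2 = ∑ i, (∑ᶠ x ∈ s, ψ i x) * ∑ᶠ y ∈ s, h i y := by
  rw [finsum_mem_prod_eq_sum_toFinset_of_support_subset hsL (support_sum_mul_subset hψ hh),
    Finset.sum_product]
  simp only [finsum_mem_eq_sum_toFinset_of_support_subset hsL (hψ _),
    finsum_mem_eq_sum_toFinset_of_support_subset hsL (hh _), Finset.sum_mul_sum]
  exact (Finset.sum_congr rfl fun x _ => Finset.sum_comm).trans Finset.sum_comm

end FiniteSums

theorem HasCompactSupport.exists_isCompact_support_subset_prod_self {X M : Type*}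
    [TopologicalSpace X] [Zero M] {f : X × X → M} (hf : HasCompactSupport f) :
    ∃ K, IsCompact K ∧ support f ⊆ K ×ˢ K :=
  ⟨Prod.fst '' tsupport f ∪ Prod.snd '' tsupport f,
    (hf.image continuous_fst).union (hf.image continuous_snd), fun p hp =>
      ⟨.inl ⟨p, subset_tsupport f hp, rfl⟩, .inr ⟨p, subset_tsupport f hp, rfl⟩⟩⟩

theorem PartitionOfUnity.abs_sub_sum_mul_le {ι X : Type*} [Fintype ι] [TopologicalSpace X]
    {s : Set X} (ρ : PartitionOfUnity ι X s) {x : X} {v ε : ℝ} {b : ι → ℝ}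
    (hv : x ∉ s → v = 0) (hε : 0 ≤ ε) (hb : ∀ i, ρ i x ≠ 0 → |v - b i| ≤ ε) :
    |v - ∑ i, ρ i x * b i| ≤ ε := by
  have hsplit : v - ∑ i, ρ i x * b i = (1 - ∑ i, ρ i x) * v + ∑ i, ρ i x * (v - b i) := by
    simp only [mul_sub, Finset.sum_sub_distrib, ← Finset.sum_mul]
    ring
  have hv' : (1 - ∑ i, ρ i x) * v = 0 := by
    by_cases hx : x ∈ s
    · simp [← finsum_eq_sum_of_fintype, ρ.sum_eq_one hx]
    · simp [hv hx]
  rw [hsplit, hv', zero_add]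
  calc |∑ i, ρ i x * (v - b i)| ≤ ∑ i, ρ i x * ε := by
        refine (Finset.abs_sum_le_sum_abs _ _).trans (Finset.sum_le_sum fun i _ => ?_)
        rw [abs_mul, abs_of_nonneg (ρ.nonneg i x)]
        by_cases hi : ρ i x = 0
        · simp [hi]
        · exact mul_le_mul_of_nonneg_left (hb i hi) (ρ.nonneg i x)
    _ = (∑ i, ρ i x) * ε := (Finset.sum_mul _ _ _).symm
    _ ≤ ε := mul_le_of_le_one_left hε (by simpa [finsum_eq_sum_of_fintype] using ρ.sum_le_one x)

theorem exists_sum_mul_approx {X : Type*} [MetricSpace X] {f : X × X → ℝ} (hf : Continuous f)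
    (hfc : HasCompactSupport f) {K U : Set X} (hK : IsCompact K) (hU : IsOpen U) (hKU : K ⊆ U)
    (hfK : ∀ p, f p ≠ 0 → p.1 ∈ K) {ε : ℝ} (hε : 0 < ε) :
    ∃ (t : Finset X) (ψ : t → X → ℝ), (∀ c, Continuous (ψ c)) ∧ (∀ c, support (ψ c) ⊆ U) ∧
      ∀ p, |f p - ∑ c, ψ c p.1 * f (c, p.2)| ≤ ε := by
  obtain ⟨δ, hδ, hfδ⟩ :=
    Metric.uniformContinuous_iff.1 (hfc.uniformContinuous_of_continuous hf) ε hε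
  obtain ⟨t, -, hKt⟩ := hK.elim_nhds_subcover (fun c => ball c δ ∩ U) fun c hc =>
    inter_mem (ball_mem_nhds c hδ) (hU.mem_nhds (hKU hc))
  obtain ⟨ρ, hρ⟩ := PartitionOfUnity.exists_isSubordinate hK.isClosed
    (fun c : t => ball (c : X) δ ∩ U) (fun c => isOpen_ball.inter hU)
    (by simpa [iUnion_subtype] using hKt)
  have hρV : ∀ c, support (ρ c) ⊆ ball (c : X) δ ∩ U := fun c => (subset_tsupport _).trans (hρ c)
  refine ⟨t, fun c => ρ c, fun c => (ρ c).continuous, fun c => (hρV c).trans inter_subset_right,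
    fun ⟨x, y⟩ => ρ.abs_sub_sum_mul_le (fun hx => ?_) hε.le fun c hc => ?_⟩
  · by_contra hxy
    exact hx (hfK (x, y) hxy)
  · rw [← Real.dist_eq]
    exact (hfδ (by simpa [dist_prod_same_right] using (hρV c hc).1)).le

section Configurations

variable {d : ℕ} {γ : ℕ → Set (EuclideanSpace ℝ (Fin d))} {γ' : Set (EuclideanSpace ℝ (Fin d))}

theorem VagueTendsto.exists_ncard_inter_le (hconv : VagueTendsto γ γ')
    (hγ : ∀ k, IsConfiguration (γ k)) {L : Set (EuclideanSpace ℝ (Fin d))} (hL : IsCompact L) :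
    ∃ M : ℝ, (∀ k, ((γ k ∩ L).ncard : ℝ) ≤ M) ∧ ((γ' ∩ L).ncard : ℝ) ≤ M := by
  obtain ⟨χ, hχL, -, hχc, hχ01⟩ :=
    exists_continuous_one_zero_of_isCompact hL isClosed_empty (disjoint_empty L)
  obtain ⟨M, hM⟩ := (hconv χ χ.continuous hχc).bddAbove_range
  refine ⟨max M (γ' ∩ L).ncard, fun k => ?_, le_max_right _ _⟩
  have hfin := (hγ k _ hχc).subset (inter_subset_inter_right _ (subset_tsupport χ))
  exact (ncard_inter_le_finsum_mem_s5 hfin (fun x => (hχ01 x).1) hχL).trans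
    ((hM ⟨k, rfl⟩).trans (le_max_left _ _))

theorem VagueTendsto.tendsto_finsum_mem_prod_sum_mul (hconv : VagueTendsto γ γ')
    (hγ : ∀ k, IsConfiguration (γ k)) (hγ' : IsConfiguration γ') {ι : Type*} [Fintype ι]
    {ψ h : ι → EuclideanSpace ℝ (Fin d) → ℝ} (hψ : ∀ i, Continuous (ψ i))
    (hh : ∀ i, Continuous (h i)) {L : Set (EuclideanSpace ℝ (Fin d))} (hL : IsCompact L)
    (hψL : ∀ i, support (ψ i) ⊆ L) (hhL : ∀ i, support (h i) ⊆ L) :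
    Tendsto (fun k => ∑ᶠ p ∈ γ k ×ˢ γ k, ∑ i, ψ i p.1 * h i p.2) atTop
      (𝓝 (∑ᶠ p ∈ γ' ×ˢ γ', ∑ i, ψ i p.1 * h i p.2)) := by
  rw [finsum_mem_prod_sum_mul (hγ' L hL) hψL hhL]
  refine Tendsto.congr (fun k => (finsum_mem_prod_sum_mul (hγ k L hL) hψL hhL).symm) ?_
  exact tendsto_finsetSum _ fun i _ =>
    (hconv _ (hψ i) (.of_support_subset_isCompact hL (hψL i))).mul
      (hconv _ (hh i) (.of_support_subset_isCompact hL (hhL i)))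

end Configurations

theorem pair_sum_seq_continuous_of_vague_tendsto_general
    (d : ℕ)
    (γ : ℕ → Set (EuclideanSpace ℝ (Fin d))) (γ' : Set (EuclideanSpace ℝ (Fin d)))
    (hγ : ∀ k, IsConfiguration (γ k)) (hγ' : IsConfiguration γ')
    (hconv : VagueTendsto γ γ')
    (f : EuclideanSpace ℝ (Fin d) × EuclideanSpace ℝ (Fin d) → ℝ)
    (hf : Continuous f) (hfc : HasCompactSupport f) :
    Tendsto (fun k => ∑ᶠ p ∈ (γ k ×ˢ γ k), f p) atTop (𝓝 (∑ᶠ p ∈ (γ' ×ˢ γ'), f p)) := by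
  obtain ⟨K, hK, hfK⟩ := hfc.exists_isCompact_support_subset_prod_self
  obtain ⟨L, hL, hKL⟩ := exists_compact_superset hK
  have hKL' : K ⊆ L := hKL.trans interior_subset
  obtain ⟨M, hMk, hM'⟩ := hconv.exists_ncard_inter_le hγ hL
  have hM : 0 ≤ M := (Nat.cast_nonneg _).trans hM'
  refine tendsto_of_forall_approx fun ε hε => ?_
  obtain ⟨t, ψ, hψ, hψU, hfψ⟩ := exists_sum_mul_approx hf hfc hK isOpen_interior hKL
    (fun p hp => (hfK hp).1) (ε := ε / (M ^ 2 + 1)) (by positivity)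
  have hψL : ∀ c, support (ψ c) ⊆ L := fun c => (hψU c).trans interior_subset
  have hfL : ∀ c : t, support (fun y => f (c, y)) ⊆ L := fun c y hy => hKL' (hfK hy).2
  have approx : ∀ s, IsConfiguration s → ((s ∩ L).ncard : ℝ) ≤ M →
      dist (∑ᶠ p ∈ s ×ˢ s, f p) (∑ᶠ p ∈ s ×ˢ s, ∑ c, ψ c p.1 * f (c, p.2)) ≤ ε := by
    intro s hs hsM
    calc _ ≤ ε / (M ^ 2 + 1) * (s ∩ L).ncard ^ 2 :=
          abs_finsum_mem_prod_sub_le (hs L hL) (hfK.trans (prod_mono hKL' hKL'))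
            (support_sum_mul_subset hψL hfL) hfψ
      _ ≤ ε / (M ^ 2 + 1) * M ^ 2 := by gcongr
      _ ≤ ε := by
          rw [div_mul_eq_mul_div, div_le_iff₀ (by positivity)]
          nlinarith
  exact ⟨_, _, hconv.tendsto_finsum_mem_prod_sum_mul hγ hγ' hψ
    (fun c => hf.comp (.prodMk_right _)) hL hψL hfL, fun k => approx _ (hγ k) (hMk k),
    approx _ hγ' hM'⟩

/-- The map `γ ↦ ⟨γ × γ, f⟩` is sequentially continuous with respect to vague convergence,
for every continuous compactly supported `f : ℝ^d × ℝ^d → ℝ`. -/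
theorem pair_sum_seq_continuous_of_vague_tendsto
    (d : ℕ) (hd : 1 ≤ d)
    (γ : ℕ → Set (EuclideanSpace ℝ (Fin d))) (γ' : Set (EuclideanSpace ℝ (Fin d)))
    (hγ : ∀ k, IsConfiguration (γ k)) (hγ' : IsConfiguration γ')
    (hconv : VagueTendsto γ γ')
    (f : EuclideanSpace ℝ (Fin d) × EuclideanSpace ℝ (Fin d) → ℝ)
    (hf : Continuous f) (hfc : HasCompactSupport f) :
    Tendsto (fun k => ∑ᶠ p ∈ (γ k ×ˢ γ k), f p) atTop (𝓝 (∑ᶠ p ∈ (γ' ×ˢ γ'), f p)) :=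
  pair_sum_seq_continuous_of_vague_tendsto_general d γ γ' hγ hγ' hconv f hf hfc

end
end

section
/- Let d ∈ ℕ, d ≥ 1. The function dist on Γ_0(ℝ^d) is a metric on the set of finite subsets of ℝ^d: dist(ζ, η) ≥ 0 with equality iff ζ = η, dist(ζ, η) = dist(η, ζ), and dist(ζ, η) ≤ dist(ζ, ξ) + dist(ξ, η) for all finite subsets ζ, η, ξ of ℝ^d. -/
/-!
Inverting a bijection `ζ → η` preserves its cost, which gives symmetry; composing bijections
`ζ → ξ → η` and applying Minkowski's inequality to the displacements gives the triangle inequality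
for `d_Eucl`. Truncation at `1` preserves the triangle inequality, and configurations of different
cardinality sit at the maximal distance `1`. A point of `ζ` outside the finite set `η` has to move
at least its positive distance to `η`, so distinct configurations are at positive distance.
-/

open Filter Topology Metric Set

noncomputable section

/-- `d_Eucl(ζ, η)`: the infimum over bijections `e : ζ → η` of
`(∑_{x ∈ ζ} |x − e(x)|²)^{1/2}`. -/
def dEucl {d : ℕ} (ζ η : Set (EuclideanSpace ℝ (Fin d))) : ℝ :=
  sInf {r | ∃ e : EuclideanSpace ℝ (Fin d) → EuclideanSpace ℝ (Fin d),
    Set.BijOn e ζ η ∧ r = Real.sqrt (∑ᶠ x ∈ ζ, ‖x - e x‖ ^ 2)}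

/-- The metric `dist` on finite configurations: `min(1, d_Eucl)` when the cardinalities
agree, and `1` otherwise. -/
def confDist {d : ℕ} (ζ η : Set (EuclideanSpace ℝ (Fin d))) : ℝ :=
  if ζ.ncard = η.ncard then min 1 (dEucl ζ η) else 1

theorem Finset.sqrt_sum_norm_add_sq_le {ι E : Type*} [SeminormedAddCommGroup E]
    (s : Finset ι) (u v : ι → E) :
    √(∑ i ∈ s, ‖u i + v i‖ ^ 2) ≤ √(∑ i ∈ s, ‖u i‖ ^ 2) + √(∑ i ∈ s, ‖v i‖ ^ 2) := by
  have h := norm_add_le (WithLp.toLp 2 fun i : s => u i) (WithLp.toLp 2 fun i : s => v i)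
  simpa only [← WithLp.toLp_add, PiLp.norm_eq_of_L2, PiLp.toLp_apply, Pi.add_apply,
    Finset.sum_coe_sort s (fun i => ‖u i + v i‖ ^ 2), Finset.sum_coe_sort s (fun i => ‖u i‖ ^ 2),
    Finset.sum_coe_sort s (fun i => ‖v i‖ ^ 2)] using h

theorem min_one_le_min_one_add_min_one {a b c : ℝ} (h : a ≤ b + c) (hb : 0 ≤ b) (hc : 0 ≤ c) :
    min 1 a ≤ min 1 b + min 1 c := by
  rcases le_total 1 b with hb1 | hb1
  · linarith [min_eq_left hb1, min_le_left 1 a, le_min zero_le_one hc]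
  rcases le_total 1 c with hc1 | hc1
  · linarith [min_eq_left hc1, min_le_left 1 a, le_min zero_le_one hb]
  rw [min_eq_right hb1, min_eq_right hc1]
  exact (min_le_right _ _).trans h

section MatchingCost

variable {E : Type*} [NormedAddCommGroup E]

def matchingCost (ζ : Set E) (e : E → E) : ℝ :=
  √(∑ᶠ x ∈ ζ, ‖x - e x‖ ^ 2)

variable {ζ ξ η : Set E}

theorem matchingCost_nonneg (ζ : Set E) (e : E → E) : 0 ≤ matchingCost ζ e :=
  Real.sqrt_nonneg _

@[simp]
theorem matchingCost_id (ζ : Set E) : matchingCost ζ id = 0 := by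
  simp [matchingCost]

theorem norm_sub_le_matchingCost (hζ : ζ.Finite) (e : E → E) {z : E} (hz : z ∈ ζ) :
    ‖z - e z‖ ≤ matchingCost ζ e := by
  rw [matchingCost, finsum_mem_eq_finite_toFinset_sum _ hζ, ← Real.sqrt_sq (norm_nonneg _)]
  exact Real.sqrt_le_sqrt <| Finset.single_le_sum (f := fun x => ‖x - e x‖ ^ 2)
    (fun _ _ => sq_nonneg _) (hζ.mem_toFinset.mpr hz)

theorem matchingCost_invFunOn {e : E → E} (he : BijOn e ζ η) :
    matchingCost η (Function.invFunOn e ζ) = matchingCost ζ e := by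
  refine congrArg Real.sqrt (finsum_mem_eq_of_bijOn e he fun x hx => ?_).symm
  rw [he.invOn_invFunOn.1 hx, norm_sub_rev]

theorem matchingCost_comp_le (hζ : ζ.Finite) {e₁ : E → E} (he₁ : BijOn e₁ ζ ξ) (e₂ : E → E) :
    matchingCost ζ (e₂ ∘ e₁) ≤ matchingCost ζ e₁ + matchingCost ξ e₂ := by
  have hξ : matchingCost ξ e₂ = √(∑ᶠ x ∈ ζ, ‖e₁ x - e₂ (e₁ x)‖ ^ 2) :=
    congrArg Real.sqrt (finsum_mem_eq_of_bijOn e₁ he₁ fun _ _ => rfl).symm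
  rw [hξ, matchingCost, matchingCost]
  simp only [finsum_mem_eq_finite_toFinset_sum _ hζ]
  simpa only [Function.comp_apply, sub_add_sub_cancel] using
    hζ.toFinset.sqrt_sum_norm_add_sq_le (fun x => x - e₁ x) (fun x => e₁ x - e₂ (e₁ x))

end MatchingCost

section dEucl

variable {d : ℕ} {ζ ξ η : Set (EuclideanSpace ℝ (Fin d))}

def matchingCosts (ζ η : Set (EuclideanSpace ℝ (Fin d))) : Set ℝ :=
  {r | ∃ e, BijOn e ζ η ∧ r = matchingCost ζ e}

theorem dEucl_eq_sInf_matchingCosts (ζ η : Set (EuclideanSpace ℝ (Fin d))) :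
    dEucl ζ η = sInf (matchingCosts ζ η) :=
  rfl

theorem bddBelow_matchingCosts (ζ η : Set (EuclideanSpace ℝ (Fin d))) :
    BddBelow (matchingCosts ζ η) :=
  ⟨0, by rintro _ ⟨e, -, rfl⟩; exact matchingCost_nonneg ζ e⟩

theorem matchingCosts_nonempty (hζ : ζ.Finite) (hη : η.Finite) (h : ζ.ncard = η.ncard) :
    (matchingCosts ζ η).Nonempty := by
  obtain ⟨e, he⟩ : ∃ e, BijOn e ζ η := hζ.exists_bijOn_of_encard_eq <| by
    rw [← hζ.cast_ncard_eq, ← hη.cast_ncard_eq, h]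
  exact ⟨_, e, he, rfl⟩

theorem dEucl_le_matchingCost {e : EuclideanSpace ℝ (Fin d) → EuclideanSpace ℝ (Fin d)}
    (he : BijOn e ζ η) : dEucl ζ η ≤ matchingCost ζ e :=
  csInf_le (bddBelow_matchingCosts ζ η) ⟨e, he, rfl⟩

theorem dEucl_nonneg (ζ η : Set (EuclideanSpace ℝ (Fin d))) : 0 ≤ dEucl ζ η :=
  Real.sInf_nonneg <| by rintro _ ⟨e, -, rfl⟩; exact matchingCost_nonneg ζ e

@[simp]
theorem dEucl_self (ζ : Set (EuclideanSpace ℝ (Fin d))) : dEucl ζ ζ = 0 :=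
  le_antisymm (by simpa using dEucl_le_matchingCost (bijOn_id ζ)) (dEucl_nonneg ζ ζ)

theorem matchingCosts_comm (ζ η : Set (EuclideanSpace ℝ (Fin d))) :
    matchingCosts ζ η = matchingCosts η ζ := by
  have key : ∀ ζ η : Set (EuclideanSpace ℝ (Fin d)), matchingCosts ζ η ⊆ matchingCosts η ζ := by
    rintro ζ η _ ⟨e, he, rfl⟩
    exact ⟨_, he.invOn_invFunOn.symm.bijOn he.surjOn.mapsTo_invFunOn he.mapsTo,
      (matchingCost_invFunOn he).symm⟩
  exact (key ζ η).antisymm (key η ζ)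

theorem dEucl_comm (ζ η : Set (EuclideanSpace ℝ (Fin d))) : dEucl ζ η = dEucl η ζ := by
  rw [dEucl_eq_sInf_matchingCosts, matchingCosts_comm]
  rfl

theorem dEucl_pos (hζ : ζ.Finite) (hη : η.Finite) (hcard : ζ.ncard = η.ncard) (hne : ζ ≠ η) :
    0 < dEucl ζ η := by
  obtain ⟨z, hzζ, hzη⟩ : ∃ z ∈ ζ, z ∉ η := by
    by_contra! h
    exact hne (eq_of_subset_of_ncard_le h hcard.ge hη)
  obtain ⟨r, e, he, rfl⟩ := matchingCosts_nonempty hζ hη hcard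
  have hδ : 0 < infDist z η :=
    (hη.isClosed.notMem_iff_infDist_pos ⟨e z, he.mapsTo hzζ⟩).mp hzη
  refine hδ.trans_le (le_csInf ⟨_, e, he, rfl⟩ ?_)
  rintro _ ⟨e', he', rfl⟩
  calc infDist z η ≤ dist z (e' z) := infDist_le_dist_of_mem (he'.mapsTo hzζ)
    _ ≤ matchingCost ζ e' := (dist_eq_norm z _).trans_le (norm_sub_le_matchingCost hζ e' hzζ)

theorem dEucl_triangle (hζ : ζ.Finite) (hξ : ξ.Finite) (hη : η.Finite)
    (h₁ : ζ.ncard = ξ.ncard) (h₂ : ξ.ncard = η.ncard) :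
    dEucl ζ η ≤ dEucl ζ ξ + dEucl ξ η := by
  rw [dEucl_eq_sInf_matchingCosts ζ ξ, dEucl_eq_sInf_matchingCosts ξ η,
    ← csInf_add (matchingCosts_nonempty hζ hξ h₁) (bddBelow_matchingCosts ζ ξ)
      (matchingCosts_nonempty hξ hη h₂) (bddBelow_matchingCosts ξ η)]
  refine le_csInf ((matchingCosts_nonempty hζ hξ h₁).add (matchingCosts_nonempty hξ hη h₂)) ?_
  rintro _ ⟨_, ⟨e₁, he₁, rfl⟩, _, ⟨e₂, he₂, rfl⟩, rfl⟩
  exact (dEucl_le_matchingCost (he₂.comp he₁)).trans (matchingCost_comp_le hζ he₁ e₂)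

end dEucl

section confDist

variable {d : ℕ} {ζ ξ η : Set (EuclideanSpace ℝ (Fin d))}

theorem confDist_of_ncard_eq (h : ζ.ncard = η.ncard) : confDist ζ η = min 1 (dEucl ζ η) :=
  if_pos h

theorem confDist_of_ncard_ne (h : ζ.ncard ≠ η.ncard) : confDist ζ η = 1 :=
  if_neg h

theorem confDist_nonneg (ζ η : Set (EuclideanSpace ℝ (Fin d))) : 0 ≤ confDist ζ η := by
  by_cases h : ζ.ncard = η.ncard
  · exact confDist_of_ncard_eq h ▸ le_min zero_le_one (dEucl_nonneg ζ η)
  · exact confDist_of_ncard_ne h ▸ zero_le_one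

theorem confDist_le_one (ζ η : Set (EuclideanSpace ℝ (Fin d))) : confDist ζ η ≤ 1 := by
  by_cases h : ζ.ncard = η.ncard
  · exact confDist_of_ncard_eq h ▸ min_le_left _ _
  · exact (confDist_of_ncard_ne h).le

@[simp]
theorem confDist_self (ζ : Set (EuclideanSpace ℝ (Fin d))) : confDist ζ ζ = 0 := by
  simp [confDist_of_ncard_eq rfl]

theorem confDist_pos (hζ : ζ.Finite) (hη : η.Finite) (hne : ζ ≠ η) : 0 < confDist ζ η := by
  by_cases h : ζ.ncard = η.ncard
  · exact confDist_of_ncard_eq h ▸ lt_min one_pos (dEucl_pos hζ hη h hne)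
  · exact confDist_of_ncard_ne h ▸ one_pos

theorem confDist_eq_zero_iff (hζ : ζ.Finite) (hη : η.Finite) : confDist ζ η = 0 ↔ ζ = η :=
  ⟨fun h => by_contra fun hne => (confDist_pos hζ hη hne).ne' h, fun h => h ▸ confDist_self ζ⟩

theorem confDist_comm (ζ η : Set (EuclideanSpace ℝ (Fin d))) : confDist ζ η = confDist η ζ := by
  by_cases h : ζ.ncard = η.ncard
  · rw [confDist_of_ncard_eq h, confDist_of_ncard_eq h.symm, dEucl_comm]
  · rw [confDist_of_ncard_ne h, confDist_of_ncard_ne (Ne.symm h)]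

theorem confDist_triangle (hζ : ζ.Finite) (hξ : ξ.Finite) (hη : η.Finite) :
    confDist ζ η ≤ confDist ζ ξ + confDist ξ η := by
  by_cases h₁ : ζ.ncard = ξ.ncard
  · by_cases h₂ : ξ.ncard = η.ncard
    · rw [confDist_of_ncard_eq h₁, confDist_of_ncard_eq h₂, confDist_of_ncard_eq (h₁.trans h₂)]
      exact min_one_le_min_one_add_min_one (dEucl_triangle hζ hξ hη h₁ h₂)
        (dEucl_nonneg ζ ξ) (dEucl_nonneg ξ η)
    · linarith [confDist_of_ncard_ne h₂, confDist_le_one ζ η, confDist_nonneg ζ ξ]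
  · linarith [confDist_of_ncard_ne h₁, confDist_le_one ζ η, confDist_nonneg ξ η]

end confDist

theorem confDist_is_metric_general (d : ℕ) :
    (∀ ζ η : Set (EuclideanSpace ℝ (Fin d)), ζ.Finite → η.Finite →
      0 ≤ confDist ζ η ∧ (confDist ζ η = 0 ↔ ζ = η)) ∧
    (∀ ζ η : Set (EuclideanSpace ℝ (Fin d)), ζ.Finite → η.Finite →
      confDist ζ η = confDist η ζ) ∧
    (∀ ζ ξ η : Set (EuclideanSpace ℝ (Fin d)), ζ.Finite → ξ.Finite → η.Finite →
      confDist ζ η ≤ confDist ζ ξ + confDist ξ η) :=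
  ⟨fun ζ η hζ hη => ⟨confDist_nonneg ζ η, confDist_eq_zero_iff hζ hη⟩,
    fun ζ η _ _ => confDist_comm ζ η,
    fun _ _ _ hζ hξ hη => confDist_triangle hζ hξ hη⟩

/-- `dist` is a metric on the set `Γ₀(ℝ^d)` of finite subsets of `ℝ^d`. -/
theorem confDist_is_metric (d : ℕ) (hd : 1 ≤ d) :
    (∀ ζ η : Set (EuclideanSpace ℝ (Fin d)), ζ.Finite → η.Finite →
      0 ≤ confDist ζ η ∧ (confDist ζ η = 0 ↔ ζ = η)) ∧
    (∀ ζ η : Set (EuclideanSpace ℝ (Fin d)), ζ.Finite → η.Finite →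
      confDist ζ η = confDist η ζ) ∧
    (∀ ζ ξ η : Set (EuclideanSpace ℝ (Fin d)), ζ.Finite → ξ.Finite → η.Finite →
      confDist ζ η ≤ confDist ζ ξ + confDist ξ η) :=
  confDist_is_metric_general d

end
end
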